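/- The matrices U = [[0,1,0],[1,0,0],[0,0,−1]] and V = [[1,0,0],[0,−1/2,√3/2],[0,−√3/2,−1/2]] in SO₃(ℝ) satisfy U² = V³ = 1, and every alternating product W = U^{ε₁} V^{±1} U ⋯ V^{±1} U^{ε₂} containing at least one factor V^{±1} is nontrivial; hence ⟨U,V⟩ ≅ ℤ/2 * ℤ/3 and SO₃(ℝ) contains a nonabelian free subgroup. -/

import Mathlib

noncomputable section

/-- The rotation `U`. -/
def matU : Matrix (Fin 3) (Fin 3) ℝ := !![0, 1, 0; 1, 0, 0; 0, 0, -1]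

/-- The rotation `V`. -/
def matV : Matrix (Fin 3) (Fin 3) ℝ :=
  !![1, 0, 0; 0, -1/2, Real.sqrt 3 / 2; 0, -Real.sqrt 3 / 2, -1/2]

namespace SO3FreeAux

open Matrix

lemma sqrt3_sq : Real.sqrt 3 * Real.sqrt 3 = 3 := Real.mul_self_sqrt (by norm_num)

lemma hUU : matU * matU = 1 := by
  ext i j
  fin_cases i <;> fin_cases j <;>
    simp [matU, Matrix.mul_apply, Fin.sum_univ_three, Matrix.one_apply, Matrix.vecHead,
      Matrix.vecTail, Fin.ext_iff]

lemma hVV : matV * matV = !![1, 0, 0; 0, -1/2, -(Real.sqrt 3 / 2); 0, Real.sqrt 3 / 2, -1/2] := by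
  ext i j
  fin_cases i <;> fin_cases j <;>
    norm_num [matV, Matrix.mul_apply, Fin.sum_univ_three, Matrix.vecHead, Matrix.vecTail,
      Matrix.cons_val_two] <;>
    ring_nf <;> norm_num [sqrt3_sq]

lemma hVVV : matV * matV * matV = 1 := by
  rw [hVV]
  ext i j
  fin_cases i <;> fin_cases j <;>
    norm_num [matV, Matrix.mul_apply, Fin.sum_univ_three, Matrix.one_apply, Matrix.vecHead,
      Matrix.vecTail, Fin.ext_iff, Matrix.cons_val_two] <;>
    ring_nf <;> norm_num [sqrt3_sq]

lemma hUt : matUᵀ = matU := by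
  ext i j
  fin_cases i <;> fin_cases j <;> simp [matU, Matrix.vecHead, Matrix.vecTail]

lemma hVt : matVᵀ = matV * matV := by
  rw [hVV]
  ext i j
  fin_cases i <;> fin_cases j <;> simp [matV, Matrix.vecHead, Matrix.vecTail, neg_div]

lemma detU : matU.det = 1 := by
  norm_num [matU, Matrix.det_fin_three, Matrix.cons_val_two]

lemma detV : matV.det = 1 := by
  norm_num [matV, Matrix.det_fin_three, Matrix.cons_val_two]; ring_nf; norm_num [sqrt3_sq]

lemma sU : ∀ X : Matrix (Fin 3) (Fin 3) ℝ, matU * (matU * X) = X := fun X => by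
  rw [← mul_assoc, hUU, one_mul]

lemma sV : ∀ X : Matrix (Fin 3) (Fin 3) ℝ, matV * (matV * (matV * X)) = X := fun X => by
  rw [← mul_assoc, ← mul_assoc, hVVV, one_mul]

lemma hVVV' : matV * (matV * matV) = 1 := by rw [← mul_assoc]; exact hVVV

/-! ### The `ℤ√3` model of scaled products -/

abbrev Z3 := Zsqrtd (3 : ℤ)

def s3 : Z3 := Zsqrtd.sqrtd

def Pz : Matrix (Fin 3) (Fin 3) Z3 := !![0, 2, 0; -1, 0, -s3; -s3, 0, 1]
def Qz : Matrix (Fin 3) (Fin 3) Z3 := !![0, 2, 0; -1, 0, s3; s3, 0, 1]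
def Rz : Matrix (Fin 3) (Fin 3) Z3 := !![0, 0, 0; 1, 0, s3; s3, 0, 1]

lemma pz_eq : Pz = Rz + (2 : Z3) • !![0, 1, 0; -1, 0, -s3; -s3, 0, 0] := by
  refine Matrix.ext fun i j => ?_
  fin_cases i <;> fin_cases j <;>
    simp [Pz, Rz, s3, Matrix.vecHead, Matrix.vecTail] <;> decide

lemma qz_eq : Qz = Rz + (2 : Z3) • !![0, 1, 0; -1, 0, 0; 0, 0, 0] := by
  refine Matrix.ext fun i j => ?_
  fin_cases i <;> fin_cases j <;>
    simp [Qz, Rz, s3, Matrix.vecHead, Matrix.vecTail] <;> decide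

lemma pzRz : Pz * Rz = Rz + (2 : Z3) • !![1, 0, s3; -2, 0, -s3; 0, 0, 0] := by
  refine Matrix.ext fun i j => ?_
  fin_cases i <;> fin_cases j <;>
    simp [Pz, Rz, s3, Matrix.mul_apply, Fin.sum_univ_three, Matrix.vecHead, Matrix.vecTail] <;>
    decide

lemma qzRz : Qz * Rz = Rz + (2 : Z3) • !![1, 0, s3; 1, 0, 0; 0, 0, 0] := by
  refine Matrix.ext fun i j => ?_
  fin_cases i <;> fin_cases j <;>
    simp [Qz, Rz, s3, Matrix.mul_apply, Fin.sum_univ_three, Matrix.vecHead, Matrix.vecTail] <;>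
    decide

def Good (M : Matrix (Fin 3) (Fin 3) Z3) : Prop := ∃ A, M = Rz + (2 : Z3) • A

def gz (b : Bool) : Matrix (Fin 3) (Fin 3) Z3 := if b then Pz else Qz

lemma good_gz (b : Bool) : Good (gz b) := by
  cases b
  · exact ⟨_, qz_eq⟩
  · exact ⟨_, pz_eq⟩

lemma gzRz (b : Bool) : ∃ C, gz b * Rz = Rz + (2 : Z3) • C := by
  cases b
  · exact ⟨_, qzRz⟩
  · exact ⟨_, pzRz⟩

lemma good_mul (b : Bool) {M : Matrix (Fin 3) (Fin 3) Z3} (h : Good M) : Good (gz b * M) := by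
  obtain ⟨A, rfl⟩ := h
  obtain ⟨C, hC⟩ := gzRz b
  refine ⟨C + gz b * A, ?_⟩
  rw [mul_add, hC, Matrix.mul_smul, smul_add, ← add_assoc]

lemma good_prod : ∀ (l : List Bool) (b : Bool), Good (((b :: l).map gz).prod)
  | [], b => by simpa using good_gz b
  | c :: t, b => by
    have := good_mul b (good_prod t c)
    simpa using this

/-! ### Mapping to `ℝ` -/

def ι : Z3 →+* ℝ := Zsqrtd.toReal (by norm_num)

def fW (b : Bool) : Matrix (Fin 3) (Fin 3) ℝ := (if b then matV else matV * matV) * matU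

lemma map_Pz : Pz.map ι = (2 : ℝ) • (matV * matU) := by
  refine Matrix.ext fun i j => ?_
  fin_cases i <;> fin_cases j <;>
    norm_num [Pz, s3, matU, matV, ι, Matrix.map_apply, Matrix.mul_apply,
      Fin.sum_univ_three, Matrix.vecHead, Matrix.vecTail, Zsqrtd.toReal_apply, Matrix.cons_val_two] <;> ring

lemma map_Qz : Qz.map ι = (2 : ℝ) • (matV * matV * matU) := by
  rw [hVV]
  refine Matrix.ext fun i j => ?_
  fin_cases i <;> fin_cases j <;>
    norm_num [Qz, s3, matU, matV, ι, Matrix.map_apply, Matrix.mul_apply,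
      Fin.sum_univ_three, Matrix.vecHead, Matrix.vecTail, Zsqrtd.toReal_apply, Matrix.cons_val_two] <;> ring

lemma map_gz (b : Bool) : (gz b).map ι = (2 : ℝ) • fW b := by
  cases b
  · simpa [gz, fW] using map_Qz
  · simpa [gz, fW] using map_Pz

lemma map_prod : ∀ l : List Bool,
    ((l.map gz).prod).map ι = (2 : ℝ) ^ l.length • (l.map fW).prod
  | [] => by simp [Matrix.map_one ι (map_zero ι) (map_one ι)]
  | b :: t => by
    have hmul : ((gz b * (t.map gz).prod).map ι) = (gz b).map ι * ((t.map gz).prod).map ι :=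
      Matrix.map_mul
    simp only [List.map_cons, List.prod_cons, hmul, map_prod t, map_gz b, List.length_cons]
    rw [smul_mul_assoc, mul_smul_comm, smul_smul, ← pow_succ']

lemma Rz22 : Rz 2 2 = 1 := by simp [Rz, Matrix.vecHead, Matrix.vecTail]

lemma good_entry_ne {M : Matrix (Fin 3) (Fin 3) Z3} (h : Good M) (c : ℤ) :
    ι (M 2 2) ≠ 2 * (c : ℝ) := by
  obtain ⟨A, rfl⟩ := h
  intro hEq
  have hM : (Rz + (2 : Z3) • A) 2 2 = 1 + 2 * A 2 2 := by
    simp [Matrix.add_apply, Matrix.smul_apply, Rz22, smul_eq_mul]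
  rw [hM] at hEq
  set a := A 2 2 with ha
  have hι : ι (1 + 2 * a) = 1 + 2 * ((a.re : ℝ) + (a.im : ℝ) * Real.sqrt 3) := by
    simp [ι, Zsqrtd.toReal_apply]
    push_cast
    ring
  rw [hι] at hEq
  by_cases hai : a.im = 0
  · rw [hai] at hEq
    norm_num at hEq
    have h2 : ((1 + 2 * a.re : ℤ) : ℝ) = ((2 * c : ℤ) : ℝ) := by push_cast; linarith
    have := Int.cast_injective (α := ℝ) h2
    omega
  · have hne : ((2 * a.im : ℤ) : ℝ) ≠ 0 := by
      exact_mod_cast mul_ne_zero two_ne_zero hai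
    have hmain : ((2 * a.im : ℤ) : ℝ) * Real.sqrt 3 = ((2 * c - 1 - 2 * a.re : ℤ) : ℝ) := by
      push_cast
      linarith
    have h3 : Real.sqrt 3 = ((2 * c - 1 - 2 * a.re : ℤ) : ℝ) / ((2 * a.im : ℤ) : ℝ) :=
      (eq_div_iff hne).mpr (by linarith)
    refine (Nat.Prime.irrational_sqrt (p := 3) (by norm_num)) ?_
    refine ⟨((2 * c - 1 - 2 * a.re : ℤ) : ℚ) / ((2 * a.im : ℤ) : ℚ), ?_⟩
    rw [show ((3 : ℕ) : ℝ) = (3 : ℝ) by norm_num, h3]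
    push_cast
    ring

/-! ### Part 3: alternating words are nontrivial -/

lemma matU22 : matU 2 2 = -1 := by simp [matU, Matrix.vecHead, Matrix.vecTail]

lemma prod_ne_one_and_ne_U {l : List Bool} (hl : l ≠ []) :
    (l.map fW).prod ≠ 1 ∧ (l.map fW).prod ≠ matU := by
  obtain ⟨b, t, rfl⟩ : ∃ b t, l = b :: t := by
    cases l with
    | nil => exact absurd rfl hl
    | cons b t => exact ⟨b, t, rfl⟩
  have hg := good_prod t b
  have hm := map_prod (b :: t)
  constructor
  · intro h1
    rw [h1] at hm
    have he : ι ((((b :: t).map gz).prod) 2 2) = (2 : ℝ) ^ (t.length + 1) := by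
      have := congrFun (congrFun hm 2) 2
      simpa [Matrix.map_apply, Matrix.smul_apply, Matrix.one_apply] using this
    refine good_entry_ne hg (2 ^ t.length) ?_
    rw [he]
    push_cast
    rw [pow_succ']
  · intro h1
    rw [h1] at hm
    have he : ι ((((b :: t).map gz).prod) 2 2) = -(2 : ℝ) ^ (t.length + 1) := by
      have := congrFun (congrFun hm 2) 2
      simpa [Matrix.map_apply, Matrix.smul_apply, matU22] using this
    refine good_entry_ne hg (-(2 ^ t.length)) ?_
    rw [he]
    push_cast
    rw [pow_succ']
    ring

lemma key3 (l : List Bool) (hl : l ≠ []) (ε₁ ε₂ : ℕ) (h1 : ε₁ ≤ 1) (h2 : ε₂ ≤ 1) :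
    matU ^ ε₁ * (l.map fW).prod * matU * matU ^ ε₂ ≠ 1 := by
  intro hEq
  obtain ⟨hne1, hneU⟩ := prod_ne_one_and_ne_U hl
  set W := (l.map fW).prod with hW
  interval_cases ε₁ <;> interval_cases ε₂ <;>
    simp only [pow_zero, pow_one, one_mul, mul_one] at hEq
  · -- W * U = 1
    exact hneU (by rw [← mul_one W, ← hUU, ← mul_assoc, hEq, one_mul])
  · -- W * U * U = 1
    rw [mul_assoc, hUU, mul_one] at hEq
    exact hne1 hEq
  · -- U * W * U = 1
    have e0 := congrArg (matU * ·) hEq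
    simp only [mul_one] at e0
    rw [← mul_assoc, ← mul_assoc, hUU, one_mul] at e0
    -- e0 : W * matU = matU
    have e1 := congrArg (· * matU) e0
    rw [mul_assoc, hUU, mul_one] at e1
    exact hne1 e1
  · -- U * W * U * U = 1
    rw [mul_assoc (matU * W), hUU, mul_one] at hEq
    exact hneU (by rw [← one_mul W, ← hUU, mul_assoc, hEq, mul_one])

/-! ### Part 4: the free subgroup -/

def Wl (es : List Bool) : Matrix (Fin 3) (Fin 3) ℝ := (es.map fW).prod

lemma Wl_append (a b : List Bool) : Wl (a ++ b) = Wl a * Wl b := by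
  simp [Wl, List.prod_append]

lemma Wl_cons (a : Bool) (es : List Bool) : Wl (a :: es) = fW a * Wl es := by
  simp [Wl]

def Ψ : Bool × Bool → Matrix (Fin 3) (Fin 3) ℝ
  | (true, true) => matU * matV * matU * (matV * matV)
  | (true, false) => matV * matU * (matV * matV) * matU
  | (false, true) => matU * (matV * matV) * matU * matV
  | (false, false) => matV * matV * matU * matV * matU

def Cm : Bool × Bool → Matrix (Fin 3) (Fin 3) ℝ
  | (true, true) => matU * matV * matU
  | (true, false) => matV * matU
  | (false, true) => matU * (matV * matV) * matU
  | (false, false) => matV * matV * matU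

def pref : Bool × Bool → Bool × Bool → List Bool
  | (true, true), (true, true) => [false, true]
  | (true, true), (false, true) => [false, false]
  | (true, true), (false, false) => [true]
  | (false, true), (true, true) => [true, true]
  | (false, true), (false, true) => [true, false]
  | (false, true), (true, false) => [false]
  | (true, false), (true, false) => [false, true]
  | (true, false), (false, false) => [false, false]
  | (true, false), (false, true) => [true]
  | (false, false), (false, false) => [true, false]
  | (false, false), (true, false) => [true, true]
  | (false, false), (true, true) => [false]
  | _, _ => []

lemma base (x : Bool × Bool) :
    Ψ x = Cm x * Wl [!x.1] * matU * matU ^ (if x.2 then 0 else 1) := by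
  rcases x with ⟨b, s⟩
  cases b <;> cases s <;>
    simp [Ψ, Cm, Wl, fW, mul_assoc, sU, sV, hUU, hVVV']

lemma step (t s : Bool × Bool) (h : ¬(t.1 = s.1 ∧ t.2 = !s.2)) :
    Ψ t * Cm s = Cm t * Wl (pref t s) := by
  rcases t with ⟨tb, ts⟩
  rcases s with ⟨sb, ss⟩
  cases tb <;> cases ts <;> cases sb <;> cases ss <;>
    simp_all [Ψ, Cm, pref, Wl, fW, mul_assoc, sU, sV, hUU, hVVV']

def NoCan (L : List (Bool × Bool)) : Prop :=
  ∀ (L₂ L₃ : List (Bool × Bool)) (y : Bool) (b : Bool), L ≠ L₂ ++ (y, b) :: (y, !b) :: L₃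

lemma inv_prod : ∀ (rest : List (Bool × Bool)) (x : Bool × Bool),
    NoCan (x :: rest) →
    ∃ es n, n ≤ 1 ∧ ((x :: rest).map Ψ).prod = Cm x * Wl es * matU * matU ^ n := by
  intro rest
  induction rest with
  | nil =>
    intro x _
    refine ⟨[!x.1], if x.2 then 0 else 1, by cases x.2 <;> simp, ?_⟩
    simpa using base x
  | cons y t ih =>
    intro x hnc
    obtain ⟨es, n, hn, he⟩ := ih y (fun L₂ L₃ a b hh => hnc (x :: L₂) L₃ a b (by rw [hh]; rfl))
    have hxy : ¬(x.1 = y.1 ∧ x.2 = !y.2) := by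
      rintro ⟨h1, h2⟩
      refine hnc [] t x.1 x.2 ?_
      rw [List.nil_append]
      have hy : y = (x.1, !x.2) := by
        rcases y with ⟨y1, y2⟩
        rcases x with ⟨x1, x2⟩
        cases y2 <;> cases x2 <;> simp_all
      rw [← hy]
    refine ⟨pref x y ++ es, n, hn, ?_⟩
    calc ((x :: y :: t).map Ψ).prod = Ψ x * ((y :: t).map Ψ).prod := by simp
    _ = Ψ x * (Cm y * Wl es * matU * matU ^ n) := by rw [he]
    _ = Ψ x * Cm y * Wl es * matU * matU ^ n := by simp only [mul_assoc]
    _ = Cm x * Wl (pref x y ++ es) * matU * matU ^ n := by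
        rw [step x y hxy, Wl_append]
        simp only [mul_assoc]

lemma hCm (x : Bool × Bool) (es : List Bool) :
    Cm x * Wl es = matU ^ (if x.2 then 1 else 0) * Wl (x.1 :: es) := by
  rcases x with ⟨b, s⟩
  cases b <;> cases s <;>
    simp [Cm, Wl, fW, mul_assoc]

lemma prod_ne_one (L : List (Bool × Bool)) (h0 : L ≠ []) (hnc : NoCan L) :
    (L.map Ψ).prod ≠ 1 := by
  obtain ⟨x, rest, rfl⟩ : ∃ x rest, L = x :: rest := by
    cases L with
    | nil => exact absurd rfl h0
    | cons x rest => exact ⟨x, rest, rfl⟩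
  obtain ⟨es, n, hn, he⟩ := inv_prod rest x hnc
  rw [he, hCm]
  exact key3 (x.1 :: es) (by simp) _ n (by split <;> simp) hn

/-! ### Assembling the group theory -/

def M3 := Matrix (Fin 3) (Fin 3) ℝ

lemma starM (A : Matrix (Fin 3) (Fin 3) ℝ) : star A = Aᵀ := by
  ext i j
  simp [Matrix.star_apply]

lemma memU : matU ∈ Matrix.orthogonalGroup (Fin 3) ℝ := by
  constructor <;> rw [starM, hUt] <;> exact hUU

lemma memV : matV ∈ Matrix.orthogonalGroup (Fin 3) ℝ := by
  constructor <;> rw [starM, hVt]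
  · exact hVVV
  · exact hVVV'

def uU : Matrix.orthogonalGroup (Fin 3) ℝ := ⟨matU, memU⟩
def vU : Matrix.orthogonalGroup (Fin 3) ℝ := ⟨matV, memV⟩

def fgen : Bool → Matrix.orthogonalGroup (Fin 3) ℝ := fun b =>
  if b then uU * vU * uU * (vU * vU) else uU * (vU * vU) * uU * vU

def ψ : FreeGroup Bool →* Matrix.orthogonalGroup (Fin 3) ℝ := FreeGroup.lift fgen

def χ : FreeGroup Bool →* Matrix (Fin 3) (Fin 3) ℝ :=
  ((Matrix.orthogonalGroup (Fin 3) ℝ).subtype).comp ψ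

lemma coe_fgen_true (b : Bool) : ((fgen b : Matrix.orthogonalGroup (Fin 3) ℝ) :
    Matrix (Fin 3) (Fin 3) ℝ) = Ψ (b, true) := by
  cases b <;> simp [fgen, uU, vU, Ψ, mul_assoc]

lemma coe_fgen_false (b : Bool) : (((fgen b)⁻¹ : Matrix.orthogonalGroup (Fin 3) ℝ) :
    Matrix (Fin 3) (Fin 3) ℝ) = Ψ (b, false) := by
  have : ((fgen b)⁻¹ : Matrix.orthogonalGroup (Fin 3) ℝ) = star (fgen b) :=
    (Unitary.star_eq_inv (fgen b)).symm
  rw [this, Unitary.coe_star, coe_fgen_true]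
  cases b <;>
    simp [Ψ, Matrix.star_mul, starM, hUt, hVt, mul_assoc, sU, sV, hUU, hVVV']

lemma χ_mk (L : List (Bool × Bool)) : χ (FreeGroup.mk L) = (L.map Ψ).prod := by
  show ((Matrix.orthogonalGroup (Fin 3) ℝ).subtype) (FreeGroup.lift fgen (FreeGroup.mk L)) = _
  rw [FreeGroup.lift_mk, map_list_prod, List.map_map]
  congr 1
  refine List.map_congr_left fun x _ => ?_
  rcases x with ⟨b, s⟩
  cases s
  · exact coe_fgen_false b
  · exact coe_fgen_true b

lemma χ_ne_one {w : FreeGroup Bool} (hw : w ≠ 1) : χ w ≠ 1 := by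
  have hL : w.toWord ≠ [] := fun h => hw (FreeGroup.toWord_eq_nil_iff.mp h)
  have hnc : NoCan w.toWord := by
    intro L₂ L₃ y b heq
    exact FreeGroup.reduce.not (p := False) ((FreeGroup.reduce_toWord w).trans heq)
  have := prod_ne_one w.toWord hL hnc
  rwa [← χ_mk, FreeGroup.mk_toWord] at this

lemma χ_of (x : Bool) : χ (FreeGroup.of x) = Ψ (x, true) := by
  show ((Matrix.orthogonalGroup (Fin 3) ℝ).subtype) (FreeGroup.lift fgen (FreeGroup.of x)) = _
  rw [FreeGroup.lift_apply_of]
  exact coe_fgen_true x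

lemma χ_of_inv (x : Bool) : χ (FreeGroup.of x)⁻¹ = Ψ (x, false) := by
  show ((Matrix.orthogonalGroup (Fin 3) ℝ).subtype) (FreeGroup.lift fgen (FreeGroup.of x)⁻¹) = _
  rw [map_inv, FreeGroup.lift_apply_of]
  exact coe_fgen_false x

lemma det_χ (w : FreeGroup Bool) : (χ w).det = 1 := by
  induction w using FreeGroup.induction_on with
  | C1 => rw [MonoidHom.map_one, Matrix.det_one]
  | of x =>
    rw [χ_of]
    cases x <;> simp [Ψ, Matrix.det_mul, detU, detV]
  | inv_of x _ =>
    rw [χ_of_inv]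
    cases x <;> simp [Ψ, Matrix.det_mul, detU, detV]
  | mul x y hx hy =>
    rw [MonoidHom.map_mul, Matrix.det_mul, hx, hy, mul_one]

lemma χ_mem (w : FreeGroup Bool) : χ w ∈ Matrix.specialOrthogonalGroup (Fin 3) ℝ :=
  Matrix.mem_specialOrthogonalGroup_iff.mpr ⟨(ψ w).2, det_χ w⟩

def φ : FreeGroup Bool →* Matrix.specialOrthogonalGroup (Fin 3) ℝ :=
  χ.codRestrict (Matrix.specialOrthogonalGroup (Fin 3) ℝ) χ_mem

lemma φ_inj : Function.Injective φ := by
  intro a b hab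
  have hχ : χ a = χ b :=
    congrArg (fun z : Matrix.specialOrthogonalGroup (Fin 3) ℝ => (z.val : Matrix (Fin 3) (Fin 3) ℝ)) hab
  by_contra hne
  have h1 : a * b⁻¹ ≠ 1 := fun h => hne (by
    have := congrArg (· * b) h
    simpa [mul_assoc] using this)
  refine χ_ne_one h1 ?_
  rw [MonoidHom.map_mul, hχ, ← MonoidHom.map_mul, mul_inv_cancel, MonoidHom.map_one]

end SO3FreeAux

open SO3FreeAux in
/-- The matrices `U, V ∈ SO₃(ℝ)` satisfy `U² = V³ = 1`, every nonempty alternating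
product `U^{ε₁} V^{±1} U ⋯ V^{±1} U^{ε₂}` is nontrivial (so `⟨U,V⟩ ≅ ℤ/2 * ℤ/3`),
and hence `SO₃(ℝ)` contains a nonabelian free subgroup of rank 2. -/
theorem so3_contains_free_group :
    matU * matU = 1 ∧ matV * matV * matV = 1 ∧
    (∀ l : List Bool, l ≠ [] → ∀ ε₁ ε₂ : ℕ, ε₁ ≤ 1 → ε₂ ≤ 1 →
      matU ^ ε₁ * (l.map fun b => (if b then matV else matV * matV) * matU).prod
        * matU * matU ^ ε₂ ≠ 1) ∧
    ∃ φ : FreeGroup Bool →* Matrix.specialOrthogonalGroup (Fin 3) ℝ,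
      Function.Injective φ := by
  refine ⟨hUU, hVVV, ?_, φ, φ_inj⟩
  intro l hl ε₁ ε₂ h1 h2
  exact key3 l hl ε₁ ε₂ h1 h2
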